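/- Let τ, γ, λ > 0, U ∈ ℝ^{p×n}, V ∈ ℝ^{p×m}, and define Ψ(W) := (τ/2)‖U − VW‖² + (γ/2)‖W‖² for W ∈ ℝ^{m×n}. If W* is a global minimizer of Ψ(W) + λ‖W‖_{0,2} over ℝ^{m×n}, then for every β ∈ (0, 1/(τ‖V‖₂² + γ)) the inclusion W* ∈ Prox_{βλ‖·‖_{0,2}}(W* − β∇Ψ(W*)) holds. -/

import Mathlib

set_option autoImplicit false

open Matrix

/-- Squared Frobenius norm of a matrix. -/
noncomputable def frobSq {m n : ℕ} (W : Matrix (Fin m) (Fin n) ℝ) : ℝ :=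
  ∑ i, ∑ j, (W i j) ^ 2

/-- Frobenius norm of a matrix. -/
noncomputable def frobNorm {m n : ℕ} (W : Matrix (Fin m) (Fin n) ℝ) : ℝ :=
  Real.sqrt (frobSq W)

open Classical in
/-- `‖W‖_{0,2}`: the number of nonzero rows of `W`, as a real number. -/
noncomputable def norm02 {m n : ℕ} (W : Matrix (Fin m) (Fin n) ℝ) : ℝ :=
  ((Finset.univ.filter fun s : Fin m => W s ≠ 0).card : ℝ)

/-- The proximal operator (as a set of global minimizers):
`Prox_β G (H) = argmin_W { G(W) + (1/(2β))‖W − H‖² }`. -/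
def ProxSet {m n : ℕ} (β : ℝ) (G : Matrix (Fin m) (Fin n) ℝ → ℝ)
    (H : Matrix (Fin m) (Fin n) ℝ) : Set (Matrix (Fin m) (Fin n) ℝ) :=
  {W | ∀ Z : Matrix (Fin m) (Fin n) ℝ,
    G W + (1 / (2 * β)) * frobSq (W - H) ≤ G Z + (1 / (2 * β)) * frobSq (Z - H)}

/-- The objective `Ψ(W) = (τ/2)‖U − VW‖² + (γ/2)‖W‖²`. -/
noncomputable def Psi {p m n : ℕ} (τ γ : ℝ) (U : Matrix (Fin p) (Fin n) ℝ)
    (V : Matrix (Fin p) (Fin m) ℝ) (W : Matrix (Fin m) (Fin n) ℝ) : ℝ :=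
  (τ / 2) * frobSq (U - V * W) + (γ / 2) * frobSq W

/-- The gradient of `Ψ`, namely `∇Ψ(W) = τ Vᵀ(VW − U) + γ W`. -/
noncomputable def gradPsi {p m n : ℕ} (τ γ : ℝ) (U : Matrix (Fin p) (Fin n) ℝ)
    (V : Matrix (Fin p) (Fin m) ℝ) (W : Matrix (Fin m) (Fin n) ℝ) :
    Matrix (Fin m) (Fin n) ℝ :=
  τ • (Vᵀ * (V * W - U)) + γ • W

/-- The spectral norm `‖V‖₂` of a matrix (largest singular value): the operator norm
of the induced linear map between Euclidean spaces. -/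
noncomputable def specNorm {p m : ℕ} (V : Matrix (Fin p) (Fin m) ℝ) : ℝ :=
  ‖LinearMap.toContinuousLinearMap (Matrix.toEuclideanLin V)‖

/-
Write `Ψ(W* + D) = Ψ(W*) + ⟨∇Ψ(W*), D⟩ + (τ/2)‖VD‖² + (γ/2)‖D‖²`. Since `‖VD‖ ≤ ‖V‖₂‖D‖`,
the quadratic remainder is at most `(1/(2β))‖D‖²` whenever `β(τ‖V‖₂² + γ) ≤ 1`, so `Ψ` is majorised
at `W*` by its linearisation plus `(1/(2β))‖·‖²`. Completing the square, the prox objective at `Z`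
equals this majorant at `Z` plus `λ‖Z‖_{0,2}`, up to the constant `(β/2)‖∇Ψ(W*)‖²`; it is therefore
bounded below by `Ψ(Z) + λ‖Z‖_{0,2} ≥ Ψ(W*) + λ‖W*‖_{0,2}`, which is the prox objective at `W*`.
-/

noncomputable def frobInner {m n : ℕ} (A B : Matrix (Fin m) (Fin n) ℝ) : ℝ :=
  ∑ i, ∑ j, A i j * B i j

section Frobenius

variable {m n : ℕ}

lemma frobInner_comm (A B : Matrix (Fin m) (Fin n) ℝ) : frobInner A B = frobInner B A := by
  simp only [frobInner, mul_comm]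

lemma frobInner_add_left (A B C : Matrix (Fin m) (Fin n) ℝ) :
    frobInner (A + B) C = frobInner A C + frobInner B C := by
  simp only [frobInner, Matrix.add_apply, add_mul, Finset.sum_add_distrib]

lemma frobInner_smul_left (c : ℝ) (A B : Matrix (Fin m) (Fin n) ℝ) :
    frobInner (c • A) B = c * frobInner A B := by
  simp only [frobInner, Matrix.smul_apply, smul_eq_mul, Finset.mul_sum, mul_assoc]

lemma frobInner_neg_left (A B : Matrix (Fin m) (Fin n) ℝ) :
    frobInner (-A) B = -frobInner A B := by
  simp only [frobInner, Matrix.neg_apply, neg_mul, Finset.sum_neg_distrib]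

lemma frobInner_eq_trace (A B : Matrix (Fin m) (Fin n) ℝ) : frobInner A B = trace (Aᵀ * B) := by
  simp only [frobInner, trace, diag, mul_apply, transpose_apply]
  exact Finset.sum_comm

lemma frobInner_transpose_mul_left {p : ℕ} (V : Matrix (Fin p) (Fin m) ℝ)
    (A : Matrix (Fin p) (Fin n) ℝ) (D : Matrix (Fin m) (Fin n) ℝ) :
    frobInner (Vᵀ * A) D = frobInner A (V * D) := by
  rw [frobInner_eq_trace, frobInner_eq_trace, transpose_mul, transpose_transpose, Matrix.mul_assoc]

lemma frobSq_nonneg (A : Matrix (Fin m) (Fin n) ℝ) : 0 ≤ frobSq A :=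
  Finset.sum_nonneg fun _ _ => Finset.sum_nonneg fun _ _ => sq_nonneg _

lemma frobSq_add (A B : Matrix (Fin m) (Fin n) ℝ) :
    frobSq (A + B) = frobSq A + 2 * frobInner A B + frobSq B := by
  simp only [frobSq, frobInner, Matrix.add_apply, add_sq, Finset.sum_add_distrib, Finset.mul_sum,
    mul_assoc]

lemma frobSq_neg (A : Matrix (Fin m) (Fin n) ℝ) : frobSq (-A) = frobSq A := by
  simp only [frobSq, Matrix.neg_apply, neg_sq]

end Frobenius

lemma sum_sq_mulVec_le_specNorm_sq {p m : ℕ} (V : Matrix (Fin p) (Fin m) ℝ) (x : Fin m → ℝ) :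
    ∑ i, (V *ᵥ x) i ^ 2 ≤ specNorm V ^ 2 * ∑ i, x i ^ 2 := by
  set L := LinearMap.toContinuousLinearMap (toEuclideanLin V)
  have hLx : L (WithLp.toLp 2 x) = WithLp.toLp 2 (V *ᵥ x) := rfl
  have hbound : ‖L (WithLp.toLp 2 x)‖ ^ 2 ≤ (‖L‖ * ‖WithLp.toLp 2 x‖) ^ 2 := by
    gcongr
    exact L.le_opNorm _
  rwa [mul_pow, hLx, EuclideanSpace.real_norm_sq_eq, EuclideanSpace.real_norm_sq_eq] at hbound

lemma frobSq_mul_le_specNorm_sq {p m n : ℕ} (V : Matrix (Fin p) (Fin m) ℝ)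
    (D : Matrix (Fin m) (Fin n) ℝ) : frobSq (V * D) ≤ specNorm V ^ 2 * frobSq D := by
  have hcol (j : Fin n) : ∑ i, (V * D) i j ^ 2 ≤ specNorm V ^ 2 * ∑ i, D i j ^ 2 :=
    sum_sq_mulVec_le_specNorm_sq V (fun i => D i j)
  calc frobSq (V * D) = ∑ j, ∑ i, (V * D) i j ^ 2 := Finset.sum_comm
    _ ≤ ∑ j, specNorm V ^ 2 * ∑ i, D i j ^ 2 := Finset.sum_le_sum fun j _ => hcol j
    _ = specNorm V ^ 2 * frobSq D := by rw [← Finset.mul_sum, frobSq, Finset.sum_comm]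

section Psi

variable {p m n : ℕ} (τ γ : ℝ) (U : Matrix (Fin p) (Fin n) ℝ) (V : Matrix (Fin p) (Fin m) ℝ)

lemma Psi_add (W D : Matrix (Fin m) (Fin n) ℝ) :
    Psi τ γ U V (W + D) = Psi τ γ U V W + frobInner (gradPsi τ γ U V W) D
      + (τ / 2) * frobSq (V * D) + (γ / 2) * frobSq D := by
  have hres : U - V * (W + D) = (U - V * W) + -(V * D) := by rw [Matrix.mul_add]; abel
  have hflip : V * W - U = -(U - V * W) := by abel
  rw [Psi, Psi, hres, frobSq_add, frobSq_add, frobSq_neg, gradPsi, frobInner_add_left,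
    frobInner_smul_left, frobInner_smul_left, frobInner_transpose_mul_left, hflip,
    frobInner_neg_left, frobInner_comm _ (-(V * D)), frobInner_neg_left, frobInner_comm (V * D)]
  ring

variable {τ} in
lemma Psi_add_le (hτ : 0 ≤ τ) (W D : Matrix (Fin m) (Fin n) ℝ) :
    Psi τ γ U V (W + D) ≤ Psi τ γ U V W + frobInner (gradPsi τ γ U V W) D
      + ((τ * specNorm V ^ 2 + γ) / 2) * frobSq D := by
  have hVD : (τ / 2) * frobSq (V * D) ≤ (τ / 2) * (specNorm V ^ 2 * frobSq D) := by
    gcongr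
    exact frobSq_mul_le_specNorm_sq V D
  rw [Psi_add]
  linarith

end Psi

lemma mem_proxSet_of_isMin_add {m n : ℕ} {f h : Matrix (Fin m) (Fin n) ℝ → ℝ}
    {W G : Matrix (Fin m) (Fin n) ℝ} {β : ℝ} (hβ : β ≠ 0)
    (hmajor : ∀ D, f (W + D) ≤ f W + frobInner G D + (1 / (2 * β)) * frobSq D)
    (hmin : ∀ Z, f W + h W ≤ f Z + h Z) :
    W ∈ ProxSet β h (W - β • G) := by
  intro Z
  have hZ : Z = W + (Z - W) := by abel
  have hcenter : W - (W - β • G) = β • G := by abel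
  have hshift : Z - (W - β • G) = (Z - W) + β • G := by abel
  have hcross : 1 / (2 * β) * (2 * frobInner (Z - W) (β • G)) = frobInner G (Z - W) := by
    rw [frobInner_comm, frobInner_smul_left]
    field_simp
  have hsquare : 1 / (2 * β) * frobSq (Z - (W - β • G)) = 1 / (2 * β) * frobSq (Z - W)
      + frobInner G (Z - W) + 1 / (2 * β) * frobSq (β • G) := by
    rw [hshift, frobSq_add, mul_add, mul_add, hcross]
  have hf := hmajor (Z - W)
  rw [← hZ] at hf
  rw [hcenter]
  linarith [hmin Z]

theorem global_minimizer_is_pStationary_general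
    (p m n : ℕ) (τ γ lam : ℝ) (hτ : 0 < τ)
    (U : Matrix (Fin p) (Fin n) ℝ) (V : Matrix (Fin p) (Fin m) ℝ)
    (Wstar : Matrix (Fin m) (Fin n) ℝ)
    (hglobal : ∀ W : Matrix (Fin m) (Fin n) ℝ,
      Psi τ γ U V Wstar + lam * norm02 Wstar ≤ Psi τ γ U V W + lam * norm02 W) :
    ∀ β : ℝ, 0 < β → β < 1 / (τ * specNorm V ^ 2 + γ) →
      Wstar ∈ ProxSet β (fun W => lam * norm02 W)
        (Wstar - β • gradPsi τ γ U V Wstar) := by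
  intro β hβ hβL
  have hL : 0 < τ * specNorm V ^ 2 + γ := one_div_pos.mp (hβ.trans hβL)
  have hLβ : (τ * specNorm V ^ 2 + γ) / 2 ≤ 1 / (2 * β) := by
    rw [lt_div_iff₀ hL] at hβL
    rw [le_div_iff₀ (by positivity)]
    linarith
  refine mem_proxSet_of_isMin_add hβ.ne' (fun D => ?_) hglobal
  calc Psi τ γ U V (Wstar + D)
      ≤ Psi τ γ U V Wstar + frobInner (gradPsi τ γ U V Wstar) D
        + ((τ * specNorm V ^ 2 + γ) / 2) * frobSq D := Psi_add_le γ U V hτ.le Wstar D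
    _ ≤ _ := by gcongr; exact frobSq_nonneg D

/-- a global minimizer `W*` of `Ψ(W) + λ‖W‖_{0,2}` is a P-stationary
point for every `β ∈ (0, 1/(τ‖V‖₂² + γ))`. -/
theorem global_minimizer_is_pStationary
    (p m n : ℕ) (τ γ lam : ℝ) (hτ : 0 < τ) (hγ : 0 < γ) (hlam : 0 < lam)
    (U : Matrix (Fin p) (Fin n) ℝ) (V : Matrix (Fin p) (Fin m) ℝ)
    (Wstar : Matrix (Fin m) (Fin n) ℝ)
    (hglobal : ∀ W : Matrix (Fin m) (Fin n) ℝ,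
      Psi τ γ U V Wstar + lam * norm02 Wstar ≤ Psi τ γ U V W + lam * norm02 W) :
    ∀ β : ℝ, 0 < β → β < 1 / (τ * specNorm V ^ 2 + γ) →
      Wstar ∈ ProxSet β (fun W => lam * norm02 W)
        (Wstar - β • gradPsi τ γ U V Wstar) :=
  global_minimizer_is_pStationary_general p m n τ γ lam hτ U V Wstar hglobal
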